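/- Monotone decrease of FA-MKMC (EM inequality): with data second-moment matrix S positive definite and current parameters (W, ψ), define B = Wᵀ(WWᵀ + diag(ψ))⁻¹, S_xz = SBᵀ, S_zz = I − BW + BS Bᵀ, and new parameters W⁺ = S_xz S_zz⁻¹ and ψ⁺ = diag(S − S_xz S_zz⁻¹ S_xzᵀ). Then L(W⁺, ψ⁺) ≤ L(W, ψ), where L(W, ψ) := log det(WWᵀ + diag(ψ)) + trace((WWᵀ + diag(ψ))⁻¹ S). -/

import Mathlib

open Matrix

noncomputable def faNegLogLik {ℓ q : ℕ} (S : Matrix (Fin ℓ) (Fin ℓ) ℝ)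
    (W : Matrix (Fin ℓ) (Fin q) ℝ) (ψ : Fin ℓ → ℝ) : ℝ :=
  Real.log (W * Wᵀ + Matrix.diagonal ψ).det +
    ((W * Wᵀ + Matrix.diagonal ψ)⁻¹ * S).trace

/-!
EM argument. Let `Sxz`, `Szz` be the posterior moments of the latent variable under the current
parameters. For every parameter `(W', D')` the objective splits, up to constants, as
`-2 E[log p(x | z)] - 2 E[log p(z)] + 2 E[log p(z | x)] = Q(W', D') + tr Szz + H(W', D')`.
The M-step minimizes `Q` exactly: completing the square in `W'` leaves a positive semidefinite
remainder, and each diagonal entry `a` of `D'` enters as `log a + r / a`, which is minimal at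
`a = r`. And `H` is largest at the current parameters: under the new gain the posterior scatter is
the current posterior covariance `K⁻¹` plus a positive semidefinite term, and, for the new
posterior precision `K'`, `log det (K' K⁻¹) ≤ tr (K' K⁻¹) - q` because `log λ ≤ λ - 1` on the
eigenvalues.
-/

namespace Matrix

theorem PosSemidef.transpose_eq_self {n : Type*} {M : Matrix n n ℝ} (hM : M.PosSemidef) :
    Mᵀ = M :=
  (isHermitian_iff_isSymm.mp hM.isHermitian).eq

variable {n : Type*} [Fintype n] [DecidableEq n]

theorem PosDef.log_det_le_trace_sub_card {M : Matrix n n ℝ} (hM : M.PosDef) :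
    Real.log M.det ≤ M.trace - Fintype.card n := by
  have hpos := hM.eigenvalues_pos
  rw [hM.isHermitian.det_eq_prod_eigenvalues, hM.isHermitian.trace_eq_sum_eigenvalues]
  simp only [RCLike.ofReal_real_eq_id, id]
  rw [Real.log_prod fun i _ => (hpos i).ne', Fintype.card_eq_sum_ones, Nat.cast_sum,
    Nat.cast_one, ← Finset.sum_sub_distrib]
  exact Finset.sum_le_sum fun i _ => Real.log_le_sub_one_of_pos (hpos i)

open scoped MatrixOrder in
theorem PosSemidef.exists_isSymm_mul_self_eq {P : Matrix n n ℝ} (hP : P.PosSemidef) :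
    ∃ R : Matrix n n ℝ, R.IsSymm ∧ R * R = P :=
  ⟨CFC.sqrt P, by simpa using (CFC.sqrt_nonneg P).posSemidef.isHermitian,
    CFC.sqrt_mul_sqrt_self P hP.nonneg⟩

theorem PosSemidef.trace_mul_nonneg {A B : Matrix n n ℝ} (hA : A.PosSemidef)
    (hB : B.PosSemidef) : 0 ≤ (A * B).trace := by
  obtain ⟨R, hR, rfl⟩ := hA.exists_isSymm_mul_self_eq
  have hRBR : (R * B * R).PosSemidef := by
    simpa [hR.eq] using hB.conjTranspose_mul_mul_same R
  rw [Matrix.mul_assoc, trace_mul_comm]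
  exact hRBR.trace_nonneg

theorem PosDef.log_det_mul_le_trace_mul_sub_card {P X : Matrix n n ℝ} (hP : P.PosDef)
    (hX : X.PosDef) : Real.log (P * X).det ≤ (P * X).trace - Fintype.card n := by
  obtain ⟨R, hR, rfl⟩ := hP.posSemidef.exists_isSymm_mul_self_eq
  have hRunit : IsUnit R := isUnit_of_mul_isUnit_left hP.isUnit
  have hRXR : (R * X * R).PosDef := by
    simpa [star_eq_conjTranspose, hR.eq] using (hRunit.posDef_star_right_conjugate_iff).mpr hX
  have hdet : (R * R * X).det = (R * X * R).det := by simp only [det_mul]; ring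
  have htr : (R * R * X).trace = (R * X * R).trace := by rw [Matrix.mul_assoc, trace_mul_comm]
  rw [hdet, htr]
  exact hRXR.log_det_le_trace_sub_card

theorem log_det_diagonal_add_trace_inv_diagonal_mul {a : n → ℝ} (ha : ∀ i, 0 < a i)
    (M : Matrix n n ℝ) :
    Real.log (diagonal a).det + ((diagonal a)⁻¹ * M).trace =
      ∑ i, (Real.log (a i) + M i i / a i) := by
  have hinv : (diagonal a)⁻¹ = diagonal a⁻¹ :=
    inv_eq_right_inv (by simp [diagonal_mul_diagonal, fun i => (ha i).ne'])
  rw [hinv, det_diagonal, Real.log_prod fun i _ => (ha i).ne', Finset.sum_add_distrib]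
  simp [trace, diagonal_mul, div_eq_inv_mul]

end Matrix

theorem Real.log_add_one_le_log_add_div {a b r : ℝ} (ha : 0 < a) (hb : 0 < b) (hbr : b ≤ r) :
    Real.log b + 1 ≤ Real.log a + r / a := by
  have h := Real.log_le_sub_one_of_pos (div_pos hb ha)
  rw [Real.log_div hb.ne' ha.ne'] at h
  have : b / a ≤ r / a := div_le_div_of_nonneg_right hbr ha.le
  linarith

namespace FactorAnalysis

variable {n m : Type*} [Fintype m]

/-- `E[(x - W z)(x - W z)ᵀ]`, given the moments `Sxx = E[x xᵀ]`, `Sxz = E[x zᵀ]` and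
`Szz = E[z zᵀ]`. -/
def residualMoment (Sxx : Matrix n n ℝ) (Sxz : Matrix n m ℝ) (Szz : Matrix m m ℝ)
    (W : Matrix n m ℝ) : Matrix n n ℝ :=
  Sxx - W * Sxzᵀ - Sxz * Wᵀ + W * Szz * Wᵀ

theorem residualMoment_eq_add {Sxx : Matrix n n ℝ} {Sxz W₀ : Matrix n m ℝ}
    {Szz : Matrix m m ℝ} (hW₀ : W₀ * Szz = Sxz) (hSzz : Szzᵀ = Szz) (W : Matrix n m ℝ) :
    residualMoment Sxx Sxz Szz W = Sxx - W₀ * Sxzᵀ + (W - W₀) * Szz * (W - W₀)ᵀ := by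
  subst hW₀
  simp only [residualMoment, transpose_mul, hSzz, transpose_sub, Matrix.sub_mul, Matrix.mul_sub,
    Matrix.mul_assoc]
  abel

variable [Fintype n]

def cov (W : Matrix n m ℝ) (D : Matrix n n ℝ) : Matrix n n ℝ := W * Wᵀ + D

theorem cov_posDef (W : Matrix n m ℝ) {D : Matrix n n ℝ} (hD : D.PosDef) : (cov W D).PosDef :=
  PosDef.posSemidef_add (by simpa using posSemidef_self_mul_conjTranspose W) hD

variable [DecidableEq n]

/-- Up to an additive constant, `-2 E[log p(x | z)]` for the model `x = W z + ε`, `z ~ N(0, 1)`,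
`ε ~ N(0, D)`, the expectation being over the data and the posterior of the current parameters,
whose moments are `Sxz` and `Szz`. -/
noncomputable def expectedCompleteNegLogLik (S : Matrix n n ℝ) (Sxz : Matrix n m ℝ)
    (Szz : Matrix m m ℝ) (W : Matrix n m ℝ) (D : Matrix n n ℝ) : ℝ :=
  Real.log D.det + (D⁻¹ * residualMoment S Sxz Szz W).trace

theorem expectedCompleteNegLogLik_diagonal_le {S : Matrix n n ℝ} {Sxz W₀ : Matrix n m ℝ}
    {Szz : Matrix m m ℝ} (hSzz : Szz.PosSemidef) (hW₀ : W₀ * Szz = Sxz) {ψ₀ : n → ℝ}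
    (hψ₀ : ∀ i, 0 < ψ₀ i) (hψ₀_eq : ψ₀ = (S - W₀ * Sxzᵀ).diag) (W : Matrix n m ℝ)
    {ψ : n → ℝ} (hψ : ∀ i, 0 < ψ i) :
    expectedCompleteNegLogLik S Sxz Szz W₀ (diagonal ψ₀) ≤
      expectedCompleteNegLogLik S Sxz Szz W (diagonal ψ) := by
  have hsq := residualMoment_eq_add (Sxx := S) hW₀ hSzz.transpose_eq_self
  have hE : ((W - W₀) * Szz * (W - W₀)ᵀ).PosSemidef := by
    simpa using hSzz.mul_mul_conjTranspose_same (W - W₀)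
  rw [expectedCompleteNegLogLik, expectedCompleteNegLogLik, hsq, hsq, sub_self, Matrix.zero_mul,
    Matrix.zero_mul, add_zero, log_det_diagonal_add_trace_inv_diagonal_mul hψ₀,
    log_det_diagonal_add_trace_inv_diagonal_mul hψ]
  refine Finset.sum_le_sum fun i _ => ?_
  have hii : (S - W₀ * Sxzᵀ) i i = ψ₀ i := by rw [hψ₀_eq]; rfl
  rw [Matrix.add_apply, hii, div_self (hψ₀ i).ne']
  exact Real.log_add_one_le_log_add_div (hψ i) (hψ₀ i) (le_add_of_nonneg_right hE.diag_nonneg)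

variable [DecidableEq m]

noncomputable def latentPrecision (W : Matrix n m ℝ) (D : Matrix n n ℝ) : Matrix m m ℝ :=
  1 + Wᵀ * D⁻¹ * W

noncomputable def gain (W : Matrix n m ℝ) (D : Matrix n n ℝ) : Matrix m n ℝ :=
  Wᵀ * (cov W D)⁻¹

/-- Up to an additive constant, `2 E[log p(z | x)]` in the setting of `expectedCompleteNegLogLik`;
`gain W D` and `latentPrecision W D` are the posterior mean map and precision of `z`. -/
noncomputable def expectedPosteriorLogLik (S : Matrix n n ℝ) (Sxz : Matrix n m ℝ)
    (Szz : Matrix m m ℝ) (W : Matrix n m ℝ) (D : Matrix n n ℝ) : ℝ :=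
  Real.log (latentPrecision W D).det -
    (latentPrecision W D * residualMoment Szz Sxzᵀ S (gain W D)).trace

section Parameters

variable (W : Matrix n m ℝ) {D : Matrix n n ℝ}

theorem latentPrecision_posDef (hD : D.PosDef) : (latentPrecision W D).PosDef :=
  PosDef.one.add_posSemidef (by simpa using hD.inv.posSemidef.conjTranspose_mul_mul_same W)

theorem latentPrecision_mul_gain (hD : D.PosDef) :
    latentPrecision W D * gain W D = Wᵀ * D⁻¹ := by
  have hKW : latentPrecision W D * Wᵀ = Wᵀ * D⁻¹ * cov W D := by
    simp only [latentPrecision, cov, Matrix.add_mul, Matrix.mul_add, Matrix.one_mul,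
      Matrix.mul_assoc, nonsing_inv_mul _ hD.det_pos.ne'.isUnit, Matrix.mul_one]
    abel
  rw [gain, ← Matrix.mul_assoc, hKW,
    mul_nonsing_inv_cancel_right _ _ (cov_posDef W hD).det_pos.ne'.isUnit]

theorem gain_transpose_mul_latentPrecision (hD : D.PosDef) :
    (gain W D)ᵀ * latentPrecision W D = D⁻¹ * W := by
  rw [← (latentPrecision_posDef W hD).posSemidef.transpose_eq_self, ← transpose_mul,
    latentPrecision_mul_gain W hD, transpose_mul, transpose_nonsing_inv,
    hD.posSemidef.transpose_eq_self, transpose_transpose]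

theorem gain_transpose_mul_latentPrecision_mul_gain (hD : D.PosDef) :
    (gain W D)ᵀ * latentPrecision W D * gain W D = D⁻¹ - (cov W D)⁻¹ := by
  have hWWt : W * Wᵀ = cov W D - D := by rw [cov]; abel
  rw [gain_transpose_mul_latentPrecision W hD, gain, Matrix.mul_assoc, ← Matrix.mul_assoc W,
    hWWt, Matrix.sub_mul, Matrix.mul_sub, mul_nonsing_inv _ (cov_posDef W hD).det_pos.ne'.isUnit,
    nonsing_inv_mul_cancel_left _ _ hD.det_pos.ne'.isUnit, Matrix.mul_one]

theorem inv_latentPrecision (hD : D.PosDef) :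
    (latentPrecision W D)⁻¹ = 1 - gain W D * W :=
  inv_eq_right_inv <| by
    rw [Matrix.mul_sub, Matrix.mul_one, ← Matrix.mul_assoc, latentPrecision_mul_gain W hD,
      latentPrecision, add_sub_cancel_right]

theorem det_cov (hD : D.PosDef) : (cov W D).det = D.det * (latentPrecision W D).det := by
  have hcov : cov W D = D * (1 + D⁻¹ * W * Wᵀ) := by
    rw [cov, Matrix.mul_add, Matrix.mul_one, ← Matrix.mul_assoc, ← Matrix.mul_assoc,
      mul_nonsing_inv _ hD.det_pos.ne'.isUnit, Matrix.one_mul, add_comm]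
  rw [hcov, det_mul, det_one_add_mul_comm, latentPrecision, Matrix.mul_assoc]

/-- The identity `(x - W z)ᵀ D⁻¹ (x - W z) + zᵀ z = xᵀ (cov W D)⁻¹ x + (z - B x)ᵀ K (z - B x)`,
with `B = gain W D` and `K = latentPrecision W D`, integrated against the joint moments. -/
theorem trace_inv_cov_mul_add_trace_latentPrecision_mul (hD : D.PosDef) (S : Matrix n n ℝ)
    (Sxz : Matrix n m ℝ) (Szz : Matrix m m ℝ) :
    ((cov W D)⁻¹ * S).trace +
        (latentPrecision W D * residualMoment Szz Sxzᵀ S (gain W D)).trace =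
      (D⁻¹ * residualMoment S Sxz Szz W).trace + Szz.trace := by
  have hSzz : (latentPrecision W D * Szz).trace =
      Szz.trace + (D⁻¹ * (W * (Szz * Wᵀ))).trace := by
    rw [latentPrecision, Matrix.add_mul, Matrix.one_mul, trace_add]
    simp only [Matrix.mul_assoc]
    rw [trace_mul_comm Wᵀ]
    simp only [Matrix.mul_assoc]
  have hSxz : (latentPrecision W D * (gain W D * Sxz)).trace = (D⁻¹ * (Sxz * Wᵀ)).trace := by
    rw [← Matrix.mul_assoc, latentPrecision_mul_gain W hD, Matrix.mul_assoc, trace_mul_comm Wᵀ,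
      Matrix.mul_assoc]
  have hSzx :
      (latentPrecision W D * (Sxzᵀ * (gain W D)ᵀ)).trace = (D⁻¹ * (W * Sxzᵀ)).trace := by
    rw [trace_mul_comm, Matrix.mul_assoc, gain_transpose_mul_latentPrecision W hD,
      trace_mul_comm Sxzᵀ, Matrix.mul_assoc]
  have hS : (latentPrecision W D * (gain W D * (S * (gain W D)ᵀ))).trace
      = (D⁻¹ * S).trace - ((cov W D)⁻¹ * S).trace := by
    rw [← Matrix.mul_assoc, ← Matrix.mul_assoc, trace_mul_comm, ← Matrix.mul_assoc,
      ← Matrix.mul_assoc, gain_transpose_mul_latentPrecision_mul_gain W hD, Matrix.sub_mul,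
      trace_sub]
  simp only [residualMoment, transpose_transpose, Matrix.mul_add, Matrix.mul_sub, trace_add,
    trace_sub, Matrix.mul_assoc]
  linarith

theorem log_det_cov_add_trace_inv_cov_mul (hD : D.PosDef) (S : Matrix n n ℝ)
    (Sxz : Matrix n m ℝ) (Szz : Matrix m m ℝ) :
    Real.log (cov W D).det + ((cov W D)⁻¹ * S).trace =
      expectedCompleteNegLogLik S Sxz Szz W D + Szz.trace +
        expectedPosteriorLogLik S Sxz Szz W D := by
  have htr := trace_inv_cov_mul_add_trace_latentPrecision_mul W hD S Sxz Szz
  rw [det_cov W hD, Real.log_mul hD.det_pos.ne' (latentPrecision_posDef W hD).det_pos.ne']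
  rw [expectedCompleteNegLogLik, expectedPosteriorLogLik]
  linarith

end Parameters

theorem expectedPosteriorLogLik_le {S : Matrix n n ℝ} (hS : S.PosSemidef) {W : Matrix n m ℝ}
    {D : Matrix n n ℝ} (hD : D.PosDef) {Sxz : Matrix n m ℝ} (hSxz : Sxz = S * (gain W D)ᵀ)
    {Szz : Matrix m m ℝ} (hSzz : Szz = 1 - gain W D * W + gain W D * S * (gain W D)ᵀ)
    (W' : Matrix n m ℝ) {D' : Matrix n n ℝ} (hD' : D'.PosDef) :
    expectedPosteriorLogLik S Sxz Szz W' D' ≤ expectedPosteriorLogLik S Sxz Szz W D := by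
  have hK := latentPrecision_posDef W hD
  have hK' := latentPrecision_posDef W' hD'
  have hgainS : gain W D * S = Sxzᵀ := by
    rw [hSxz, transpose_mul, transpose_transpose, hS.transpose_eq_self]
  have hsq (B : Matrix m n ℝ) : residualMoment Szz Sxzᵀ S B =
      (latentPrecision W D)⁻¹ + (B - gain W D) * S * (B - gain W D)ᵀ := by
    rw [residualMoment_eq_add hgainS hS.transpose_eq_self, transpose_transpose, hSxz,
      inv_latentPrecision W hD, hSzz, ← Matrix.mul_assoc]
    abel
  obtain ⟨E, hE, hmoment⟩ : ∃ E : Matrix m m ℝ, E.PosSemidef ∧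
      residualMoment Szz Sxzᵀ S (gain W' D') = (latentPrecision W D)⁻¹ + E :=
    ⟨_, by simpa using hS.mul_mul_conjTranspose_same (gain W' D' - gain W D), hsq _⟩
  have hold : expectedPosteriorLogLik S Sxz Szz W D =
      Real.log (latentPrecision W D).det - Fintype.card m := by
    rw [expectedPosteriorLogLik, hsq, sub_self, Matrix.zero_mul, Matrix.zero_mul, add_zero,
      mul_nonsing_inv _ hK.det_pos.ne'.isUnit, trace_one]
  have hnew : expectedPosteriorLogLik S Sxz Szz W' D' = Real.log (latentPrecision W' D').det -
      (latentPrecision W' D' * (latentPrecision W D)⁻¹).trace -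
        (latentPrecision W' D' * E).trace := by
    rw [expectedPosteriorLogLik, hmoment, Matrix.mul_add, trace_add]
    ring
  have hGibbs := hK'.log_det_mul_le_trace_mul_sub_card hK.inv
  rw [det_mul, det_nonsing_inv, Ring.inverse_eq_inv, Real.log_mul hK'.det_pos.ne'
    (inv_pos.mpr hK.det_pos).ne', Real.log_inv] at hGibbs
  have hcross := hK'.posSemidef.trace_mul_nonneg hE
  linarith

end FactorAnalysis

open FactorAnalysis in
theorem fa_em_monotone_decrease_general {ℓ q : ℕ}
    (S : Matrix (Fin ℓ) (Fin ℓ) ℝ) (hS : S.PosDef)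
    (W : Matrix (Fin ℓ) (Fin q) ℝ) (ψ : Fin ℓ → ℝ) (hψ : ∀ i, 0 < ψ i)
    (B : Matrix (Fin q) (Fin ℓ) ℝ)
    (hB : B = Wᵀ * (W * Wᵀ + Matrix.diagonal ψ)⁻¹)
    (Sxz : Matrix (Fin ℓ) (Fin q) ℝ) (hSxz : Sxz = S * Bᵀ)
    (Szz : Matrix (Fin q) (Fin q) ℝ)
    (hSzz : Szz = (1 : Matrix (Fin q) (Fin q) ℝ) - B * W + B * S * Bᵀ)
    (Wplus : Matrix (Fin ℓ) (Fin q) ℝ) (hWplus : Wplus = Sxz * Szz⁻¹)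
    (ψplus : Fin ℓ → ℝ) (hψplus : ψplus = (S - Sxz * Szz⁻¹ * Sxzᵀ).diag)
    (hψpluspos : ∀ i, 0 < ψplus i) :
    faNegLogLik S Wplus ψplus ≤ faNegLogLik S W ψ := by
  have hD : (diagonal ψ).PosDef := .diagonal hψ
  have hDplus : (diagonal ψplus).PosDef := .diagonal hψpluspos
  change B = gain W (diagonal ψ) at hB
  subst hB
  have hSzzPos : Szz.PosDef := by
    have h := (latentPrecision_posDef W hD).inv.add_posSemidef
      (hS.posSemidef.mul_mul_conjTranspose_same (gain W (diagonal ψ)))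
    rwa [conjTranspose_eq_transpose_of_trivial, inv_latentPrecision W hD, ← hSzz] at h
  have hWplusSzz : Wplus * Szz = Sxz := by
    rw [hWplus, nonsing_inv_mul_cancel_right _ _ hSzzPos.det_pos.ne'.isUnit]
  have hQ := expectedCompleteNegLogLik_diagonal_le hSzzPos.posSemidef hWplusSzz hψpluspos
    (by rw [hψplus, hWplus]) W hψ
  have hH := expectedPosteriorLogLik_le hS.posSemidef hD hSxz hSzz Wplus hDplus
  have hnew : faNegLogLik S Wplus ψplus = _ :=
    log_det_cov_add_trace_inv_cov_mul Wplus hDplus S Sxz Szz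
  have hold : faNegLogLik S W ψ = _ := log_det_cov_add_trace_inv_cov_mul W hD S Sxz Szz
  linarith

theorem fa_em_monotone_decrease {ℓ q : ℕ}
    (S : Matrix (Fin ℓ) (Fin ℓ) ℝ) (hS : S.PosDef)
    (W : Matrix (Fin ℓ) (Fin q) ℝ) (ψ : Fin ℓ → ℝ) (hψ : ∀ i, 0 < ψ i)
    (B : Matrix (Fin q) (Fin ℓ) ℝ)
    (hB : B = Wᵀ * (W * Wᵀ + Matrix.diagonal ψ)⁻¹)
    (Sxz : Matrix (Fin ℓ) (Fin q) ℝ) (hSxz : Sxz = S * Bᵀ)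
    (Szz : Matrix (Fin q) (Fin q) ℝ)
    (hSzz : Szz = (1 : Matrix (Fin q) (Fin q) ℝ) - B * W + B * S * Bᵀ)
    (hSzzInv : IsUnit Szz.det)
    (Wplus : Matrix (Fin ℓ) (Fin q) ℝ) (hWplus : Wplus = Sxz * Szz⁻¹)
    (ψplus : Fin ℓ → ℝ) (hψplus : ψplus = (S - Sxz * Szz⁻¹ * Sxzᵀ).diag)
    (hψpluspos : ∀ i, 0 < ψplus i) :
    faNegLogLik S Wplus ψplus ≤ faNegLogLik S W ψ :=
  fa_em_monotone_decrease_general S hS W ψ hψ B hB Sxz hSxz Szz hSzz Wplus hWplus ψplus hψplus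
    hψpluspos
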